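/- Let P be an n-detector modelling a spatial array of M ≥ n click detectors with quantum efficiency η ∈ [0, 1] and no dark counts, so that in particular P(n, n) = (M! / (M − n)!) · η^n / M^n. Then the PNR quality over all photon-number distributions satisfies Q_n(P) ≤ η^n. -/

import Mathlib

/-- A photon-number distribution: nonnegative with total probability 1. -/
def PhotonDist (p : ℕ → ℝ) : Prop :=
  (∀ m, 0 ≤ p m) ∧ (∑' m, p m) = 1

/-- An `n`-detector: conditional output probabilities `P k m` (probability of
output `k` given `m` input photons), supported on outputs `0, …, n`. -/
def IsNDetector (n : ℕ) (P : ℕ → ℕ → ℝ) : Prop :=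
  (∀ k m, 0 ≤ P k m ∧ P k m ≤ 1) ∧
  (∀ k m, n < k → P k m = 0) ∧
  (∀ m, (∑ k ∈ Finset.range (n + 1), P k m) = 1)

/-- The desired-output probability of the `n`-detector `P` on the input
distribution `p`. -/
noncomputable def desired (n : ℕ) (P : ℕ → ℕ → ℝ) (p : ℕ → ℝ) : ℝ :=
  (∑ m ∈ Finset.range (n + 1), P m m * p m) +
    ∑' m, if n < m then P n m * p m else 0

/-- The PNR quality of the `n`-detector `P` over the set of ALL photon-number
distributions. -/
noncomputable def qualityAll (n : ℕ) (P : ℕ → ℕ → ℝ) : ℝ :=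
  sInf (desired n P '' {p | PhotonDist p})

/-! The point mass at `n` photons is a photon-number distribution on which the desired-output
probability is `P(n, n)`; since every desired-output probability is nonnegative, `Q_n(P)` is
bounded by `P(n, n)`, and `M!/(M-n)! ≤ M^n` gives `P(n, n) ≤ η^n`. -/

theorem photonDist_single (n : ℕ) : PhotonDist (Pi.single n 1 : ℕ → ℝ) :=
  ⟨fun m => by rw [Pi.single_apply]; split_ifs <;> norm_num, tsum_pi_single n 1⟩

theorem desired_single (n : ℕ) (P : ℕ → ℕ → ℝ) :
    desired n P (Pi.single n 1 : ℕ → ℝ) = P n n := by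
  have hdiag : ∑ m ∈ Finset.range (n + 1), P m m * (Pi.single n 1 : ℕ → ℝ) m = P n n := by
    simp only [Pi.single_apply, mul_ite, mul_one, mul_zero, Finset.sum_ite_eq',
      Finset.self_mem_range_succ, if_true]
  have htail : ∀ m, (if n < m then P n m * (Pi.single n 1 : ℕ → ℝ) m else 0) = 0 := fun m => by
    split_ifs with h
    · rw [Pi.single_eq_of_ne h.ne', mul_zero]
    · rfl
  rw [desired, hdiag, tsum_congr htail, tsum_zero, add_zero]

theorem desired_nonneg {n : ℕ} {P : ℕ → ℕ → ℝ} {p : ℕ → ℝ} (hP : ∀ k m, 0 ≤ P k m)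
    (hp : ∀ m, 0 ≤ p m) : 0 ≤ desired n P p := by
  refine add_nonneg (Finset.sum_nonneg fun m _ => mul_nonneg (hP m m) (hp m)) (tsum_nonneg ?_)
  intro m
  split_ifs
  exacts [mul_nonneg (hP n m) (hp m), le_rfl]

theorem IsNDetector.qualityAll_le_desired {n : ℕ} {P : ℕ → ℕ → ℝ} (hP : IsNDetector n P)
    {p : ℕ → ℝ} (hp : PhotonDist p) : qualityAll n P ≤ desired n P p := by
  refine csInf_le ⟨0, ?_⟩ ⟨p, hp, rfl⟩
  rintro _ ⟨q, hq, rfl⟩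
  exact desired_nonneg (fun k m => (hP.1 k m).1) hq.1

theorem IsNDetector.qualityAll_le_diag {n : ℕ} {P : ℕ → ℕ → ℝ} (hP : IsNDetector n P) :
    qualityAll n P ≤ P n n := by
  simpa only [desired_single] using hP.qualityAll_le_desired (photonDist_single n)

theorem descFactorial_mul_div_pow_le (M n : ℕ) {x : ℝ} (hx : 0 ≤ x) :
    (M.descFactorial n : ℝ) * x / (M : ℝ) ^ n ≤ x := by
  rcases (pow_nonneg (Nat.cast_nonneg M) n : (0 : ℝ) ≤ (M : ℝ) ^ n).eq_or_lt with h | h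
  · rw [← h, div_zero]
    exact hx
  · rw [div_le_iff₀ h, mul_comm x]
    gcongr
    exact_mod_cast Nat.descFactorial_le_pow M n

theorem spatial_array_quality_le_eta_pow_general
    (n M : ℕ) (η : ℝ) (hη0 : 0 ≤ η)
    (P : ℕ → ℕ → ℝ) (hP : IsNDetector n P)
    (hPnn : P n n = (M.descFactorial n : ℝ) * η ^ n / (M : ℝ) ^ n) :
    qualityAll n P ≤ η ^ n :=
  calc qualityAll n P ≤ P n n := hP.qualityAll_le_diag
    _ ≤ η ^ n := hPnn ▸ descFactorial_mul_div_pow_le M n (pow_nonneg hη0 n)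

/-- for an `n`-detector modelling a spatial array of `M ≥ n`
click detectors of quantum efficiency `η` and no dark counts, so that
`P(n, n) = (M!/(M-n)!) · η^n / M^n`, the PNR quality over all photon-number
distributions satisfies `Q_n(P) ≤ η^n`. -/
theorem spatial_array_quality_le_eta_pow
    (n M : ℕ) (hnM : n ≤ M) (η : ℝ) (hη0 : 0 ≤ η) (hη1 : η ≤ 1)
    (P : ℕ → ℕ → ℝ) (hP : IsNDetector n P)
    (hPnn : P n n = (M.descFactorial n : ℝ) * η ^ n / (M : ℝ) ^ n) :
    qualityAll n P ≤ η ^ n :=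
  spatial_array_quality_le_eta_pow_general n M η hη0 P hP hPnn
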